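/- Let Q₀ = [[0, V*],[V, 0]] and Q₁ = [[2Λ−1, 0],[0, 1−2Λ]] on H ⊕ H, where V is unitary on H and Λ is an orthogonal projection on H. Then E₋₁(Q₀) ∩ E₁(Q₁) is isomorphic (via (x, −Vx) ↦ x) to ker(Λ V restricted to Ran Λ) = {x ∈ Ran Λ : Vx ∈ ker Λ}, and E₁(Q₀) ∩ E₋₁(Q₁) is isomorphic to {x ∈ Ran Λ : V*x ∈ ker Λ}. Consequently, if ΛVΛ + Λ^⊥ is Fredholm, then dim(E₋₁(Q₀)∩E₁(Q₁)) − dim(E₁(Q₀)∩E₋₁(Q₁)) = index(ΛVΛ + Λ^⊥). -/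

import Mathlib

open ContinuousLinearMap

variable {H : Type*} [NormedAddCommGroup H] [InnerProductSpace ℂ H] [CompleteSpace H]

/-- The block operator `[[A, B],[C, D]]` on the Hilbert space `H ⊕₂ H`. -/
noncomputable def blockOp (A B C D : H →L[ℂ] H) :
    WithLp 2 (H × H) →L[ℂ] WithLp 2 (H × H) :=
  letI e := WithLp.prodContinuousLinearEquiv 2 ℂ H H
  (e.symm : H × H →L[ℂ] WithLp 2 (H × H)) ∘L
    ((A ∘L ContinuousLinearMap.fst ℂ H H + B ∘L ContinuousLinearMap.snd ℂ H H).prod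
      (C ∘L ContinuousLinearMap.fst ℂ H H + D ∘L ContinuousLinearMap.snd ℂ H H)) ∘L
    (e : WithLp 2 (H × H) →L[ℂ] H × H)

noncomputable def eE : WithLp 2 (H × H) ≃L[ℂ] H × H := WithLp.prodContinuousLinearEquiv 2 ℂ H H

set_option linter.unusedSectionVars false

lemma blockOp_apply' (A B C D : H →L[ℂ] H) (z : WithLp 2 (H × H)) :
    eE (blockOp A B C D z) = (A (eE z).1 + B (eE z).2, C (eE z).1 + D (eE z).2) := rfl

lemma eq_zero_iff' (w : WithLp 2 (H × H)) : w = 0 ↔ (eE w).1 = 0 ∧ (eE w).2 = 0 := by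
  rw [← Prod.mk.injEq, Prod.mk.eta, ← Prod.zero_eq_mk, ← map_zero (eE (H := H))]
  exact (eE.injective.eq_iff).symm

lemma mem_ker_add (A B C D : H →L[ℂ] H) (z : WithLp 2 (H × H)) :
    z ∈ LinearMap.ker ((1 + blockOp A B C D : WithLp 2 (H × H) →L[ℂ] WithLp 2 (H × H)) : WithLp 2 (H × H) →ₗ[ℂ] WithLp 2 (H × H)) ↔
      (eE z).1 + (A (eE z).1 + B (eE z).2) = 0 ∧ (eE z).2 + (C (eE z).1 + D (eE z).2) = 0 := by
  rw [LinearMap.mem_ker]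
  simp only [ContinuousLinearMap.coe_coe, add_apply, one_apply_eq_self, eq_zero_iff', map_add,
    blockOp_apply', Prod.fst_add, Prod.snd_add]

lemma mem_ker_sub (A B C D : H →L[ℂ] H) (z : WithLp 2 (H × H)) :
    z ∈ LinearMap.ker ((1 - blockOp A B C D : WithLp 2 (H × H) →L[ℂ] WithLp 2 (H × H)) : WithLp 2 (H × H) →ₗ[ℂ] WithLp 2 (H × H)) ↔
      (eE z).1 - (A (eE z).1 + B (eE z).2) = 0 ∧ (eE z).2 - (C (eE z).1 + D (eE z).2) = 0 := by
  rw [LinearMap.mem_ker]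
  simp only [ContinuousLinearMap.coe_coe, sub_apply, one_apply_eq_self, eq_zero_iff', map_sub,
    blockOp_apply', Prod.fst_sub, Prod.snd_sub]

/-- `x ↦ e.symm (x, -Vx)` -/
noncomputable def Jm (V : H →L[ℂ] H) : H →L[ℂ] WithLp 2 (H × H) :=
  ((eE (H := H)).symm : H × H →L[ℂ] WithLp 2 (H × H)) ∘L
    ((ContinuousLinearMap.id ℂ H).prod (-V))

/-- `y ↦ e.symm (V*y, y)` -/
noncomputable def Jp (V : H →L[ℂ] H) : H →L[ℂ] WithLp 2 (H × H) :=
  ((eE (H := H)).symm : H × H →L[ℂ] WithLp 2 (H × H)) ∘L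
    ((ContinuousLinearMap.adjoint V).prod (ContinuousLinearMap.id ℂ H))

lemma eE_Jm (V : H →L[ℂ] H) (x : H) : eE (Jm V x) = (x, -(V x)) := rfl
lemma eE_Jp (V : H →L[ℂ] H) (y : H) :
    eE (Jp V y) = (ContinuousLinearMap.adjoint V y, y) := rfl

lemma Jm_inj (V : H →L[ℂ] H) : Function.Injective (Jm V) := fun a b h => by
  have := congrArg (fun z => (eE z).1) h
  simpa [eE_Jm] using this

lemma Jp_inj (V : H →L[ℂ] H) : Function.Injective (Jp V) := fun a b h => by
  have := congrArg (fun z => (eE z).2) h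
  simpa [eE_Jp] using this

lemma mem_range_proj {Λ : H →L[ℂ] H} (hΛidem : Λ * Λ = Λ) (x : H) :
    x ∈ LinearMap.range (Λ : H →ₗ[ℂ] H) ↔ Λ x = x := by
  refine ⟨?_, fun h => ⟨x, h⟩⟩
  rintro ⟨y, rfl⟩
  have := congrArg (fun f => f y) hΛidem
  simpa [mul_apply] using this

lemma ker_eq_minus (V Λ : H →L[ℂ] H)
    (hV₁ : ContinuousLinearMap.adjoint V * V = 1) (hΛidem : Λ * Λ = Λ) :
    LinearMap.ker ((1 + blockOp 0 (ContinuousLinearMap.adjoint V) V 0 : WithLp 2 (H × H) →L[ℂ] WithLp 2 (H × H)) : WithLp 2 (H × H) →ₗ[ℂ] WithLp 2 (H × H)) ⊓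
        LinearMap.ker ((1 - blockOp ((2 : ℂ) • Λ - 1) 0 0 (1 - (2 : ℂ) • Λ) : WithLp 2 (H × H) →L[ℂ] WithLp 2 (H × H)) : WithLp 2 (H × H) →ₗ[ℂ] WithLp 2 (H × H)) =
      Submodule.map ((Jm V : H →L[ℂ] WithLp 2 (H × H)) : H →ₗ[ℂ] WithLp 2 (H × H))
        (LinearMap.range (Λ : H →ₗ[ℂ] H) ⊓ LinearMap.ker ((Λ ∘L V : H →L[ℂ] H) : H →ₗ[ℂ] H)) := by
  have hV₁' : ∀ x, ContinuousLinearMap.adjoint V (V x) = x := fun x => by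
    have := congrArg (fun f => f x) hV₁; simpa [mul_apply] using this
  ext z
  constructor
  · intro hz
    obtain ⟨hz1, hz2⟩ := Submodule.mem_inf.mp hz
    rw [mem_ker_add] at hz1
    rw [mem_ker_sub] at hz2
    obtain ⟨h1, h2⟩ := hz1
    obtain ⟨h3, h4⟩ := hz2
    simp only [zero_apply, zero_add, add_zero, sub_apply, smul_apply, one_apply_eq_self] at h1 h2 h3 h4
    have hΛ1 : Λ (eE z).1 = (eE z).1 := by
      have h3' : (2 : ℂ) • ((eE z).1 - Λ (eE z).1) = 0 := by rw [← h3]; module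
      have := (smul_eq_zero.mp h3').resolve_left two_ne_zero
      exact (sub_eq_zero.mp this).symm
    have hΛ2 : Λ (eE z).2 = 0 := by
      have h4' : (2 : ℂ) • (Λ (eE z).2) = 0 := by rw [← h4]; module
      exact (smul_eq_zero.mp h4').resolve_left two_ne_zero
    have hVx : V (eE z).1 = -((eE z).2) := by
      have := h2; rw [add_comm] at this
      exact eq_neg_of_add_eq_zero_left this
    refine Submodule.mem_map.mpr ⟨(eE z).1, Submodule.mem_inf.mpr ⟨?_, ?_⟩, ?_⟩
    · exact (mem_range_proj hΛidem _).mpr hΛ1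
    · rw [LinearMap.mem_ker]
      simp only [ContinuousLinearMap.coe_coe, comp_apply]
      rw [hVx, map_neg, hΛ2, neg_zero]
    · apply eE.injective
      rw [ContinuousLinearMap.coe_coe, eE_Jm, ← Prod.mk.eta (p := eE z)]
      exact Prod.ext rfl (by rw [hVx, neg_neg])
  · intro hz
    obtain ⟨x, hx, rfl⟩ := Submodule.mem_map.mp hz
    obtain ⟨hx1, hx2⟩ := Submodule.mem_inf.mp hx
    rw [mem_range_proj hΛidem] at hx1
    rw [LinearMap.mem_ker] at hx2
    simp only [ContinuousLinearMap.coe_coe, comp_apply] at hx2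
    rw [Submodule.mem_inf, mem_ker_add, mem_ker_sub]
    rw [ContinuousLinearMap.coe_coe, eE_Jm]
    simp only [zero_apply, zero_add, add_zero, sub_apply, smul_apply, one_apply_eq_self,
      map_neg, hV₁', hx1, hx2, neg_zero]
    refine ⟨⟨by abel, by abel⟩, by module, by module⟩

lemma ker_eq_plus (V Λ : H →L[ℂ] H)
    (hV₂ : V * ContinuousLinearMap.adjoint V = 1) (hΛidem : Λ * Λ = Λ) :
    LinearMap.ker ((1 - blockOp 0 (ContinuousLinearMap.adjoint V) V 0 : WithLp 2 (H × H) →L[ℂ] WithLp 2 (H × H)) : WithLp 2 (H × H) →ₗ[ℂ] WithLp 2 (H × H)) ⊓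
        LinearMap.ker ((1 + blockOp ((2 : ℂ) • Λ - 1) 0 0 (1 - (2 : ℂ) • Λ) : WithLp 2 (H × H) →L[ℂ] WithLp 2 (H × H)) : WithLp 2 (H × H) →ₗ[ℂ] WithLp 2 (H × H)) =
      Submodule.map ((Jp V : H →L[ℂ] WithLp 2 (H × H)) : H →ₗ[ℂ] WithLp 2 (H × H))
        (LinearMap.range (Λ : H →ₗ[ℂ] H) ⊓ LinearMap.ker ((Λ ∘L ContinuousLinearMap.adjoint V : H →L[ℂ] H) : H →ₗ[ℂ] H)) := by
  have hV₂' : ∀ x, V (ContinuousLinearMap.adjoint V x) = x := fun x => by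
    have := congrArg (fun f => f x) hV₂; simpa [mul_apply] using this
  ext z
  constructor
  · intro hz
    obtain ⟨hz1, hz2⟩ := Submodule.mem_inf.mp hz
    rw [mem_ker_sub] at hz1
    rw [mem_ker_add] at hz2
    obtain ⟨h1, h2⟩ := hz1
    obtain ⟨h3, h4⟩ := hz2
    simp only [zero_apply, zero_add, add_zero, sub_apply, smul_apply, one_apply_eq_self] at h1 h2 h3 h4
    have hΛ2 : Λ (eE z).2 = (eE z).2 := by
      have h4' : (2 : ℂ) • ((eE z).2 - Λ (eE z).2) = 0 := by rw [← h4]; module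
      have := (smul_eq_zero.mp h4').resolve_left two_ne_zero
      exact (sub_eq_zero.mp this).symm
    have hΛ1 : Λ (eE z).1 = 0 := by
      have h3' : (2 : ℂ) • (Λ (eE z).1) = 0 := by rw [← h3]; module
      exact (smul_eq_zero.mp h3').resolve_left two_ne_zero
    have hVy : ContinuousLinearMap.adjoint V (eE z).2 = (eE z).1 :=
      (sub_eq_zero.mp h1).symm
    refine Submodule.mem_map.mpr ⟨(eE z).2, Submodule.mem_inf.mpr ⟨?_, ?_⟩, ?_⟩
    · exact (mem_range_proj hΛidem _).mpr hΛ2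
    · rw [LinearMap.mem_ker]
      simp only [ContinuousLinearMap.coe_coe, comp_apply]
      rw [hVy, hΛ1]
    · apply eE.injective
      rw [ContinuousLinearMap.coe_coe, eE_Jp, ← Prod.mk.eta (p := eE z)]
      exact Prod.ext hVy rfl
  · intro hz
    obtain ⟨y, hy, rfl⟩ := Submodule.mem_map.mp hz
    obtain ⟨hy1, hy2⟩ := Submodule.mem_inf.mp hy
    rw [mem_range_proj hΛidem] at hy1
    rw [LinearMap.mem_ker] at hy2
    simp only [ContinuousLinearMap.coe_coe, comp_apply] at hy2
    rw [Submodule.mem_inf, mem_ker_sub, mem_ker_add]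
    rw [ContinuousLinearMap.coe_coe, eE_Jp]
    simp only [zero_apply, zero_add, add_zero, sub_apply, smul_apply, one_apply_eq_self,
      hV₂', hy1, hy2]
    refine ⟨⟨by abel, by abel⟩, by module, by module⟩

lemma ker_T_eq (W Λ : H →L[ℂ] H) (hΛidem : Λ * Λ = Λ) :
    LinearMap.ker ((Λ ∘L W ∘L Λ + (1 - Λ) : H →L[ℂ] H) : H →ₗ[ℂ] H) =
      LinearMap.range (Λ : H →ₗ[ℂ] H) ⊓ LinearMap.ker ((Λ ∘L W : H →L[ℂ] H) : H →ₗ[ℂ] H) := by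
  have hΛ : ∀ u, Λ (Λ u) = Λ u := fun u => by
    have := congrArg (fun f => f u) hΛidem; simpa [mul_apply] using this
  ext x
  simp only [LinearMap.mem_ker, Submodule.mem_inf, mem_range_proj hΛidem,
    ContinuousLinearMap.coe_coe, add_apply, comp_apply, sub_apply, one_apply_eq_self]
  constructor
  · intro h
    have h2 : Λ (W (Λ x)) = 0 := by
      have := congrArg Λ h
      simpa [map_add, map_sub, hΛ, map_zero] using this
    have h3 : Λ x = x := by
      rw [h2, zero_add, sub_eq_zero] at h
      exact h.symm
    rw [h3] at h2
    exact ⟨h3, h2⟩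
  · rintro ⟨h1, h2⟩
    rw [h1, h2, zero_add, sub_self]

lemma adjoint_T (V Λ : H →L[ℂ] H) (hΛsa : IsSelfAdjoint Λ) :
    ContinuousLinearMap.adjoint (Λ ∘L V ∘L Λ + (1 - Λ)) =
      Λ ∘L ContinuousLinearMap.adjoint V ∘L Λ + (1 - Λ) := by
  have hΛ : ContinuousLinearMap.adjoint Λ = Λ := hΛsa.adjoint_eq
  have h1 : ContinuousLinearMap.adjoint (1 : H →L[ℂ] H) = 1 := by
    rw [← star_eq_adjoint]; exact star_one _
  rw [map_add, map_sub, adjoint_comp, adjoint_comp, hΛ, h1]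
  ext x
  simp [comp_apply, add_apply, sub_apply, one_apply]

/-- For `Q₀ = [[0,V*],[V,0]]` and `Q₁ = [[2Λ−1,0],[0,1−2Λ]]` with `V` unitary and `Λ`
an orthogonal projection: `E₋₁(Q₀) ∩ E₁(Q₁) ≅ {x ∈ Ran Λ : Vx ∈ ker Λ}`,
`E₁(Q₀) ∩ E₋₁(Q₁) ≅ {x ∈ Ran Λ : V*x ∈ ker Λ}`, and if `T = ΛVΛ + Λ^⊥` is Fredholm
then the difference of the dimensions equals `index T = dim ker T − dim ker T*`. -/
theorem eigenspace_intersections_and_index (V Λ : H →L[ℂ] H)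
    (hV₁ : ContinuousLinearMap.adjoint V * V = 1)
    (hV₂ : V * ContinuousLinearMap.adjoint V = 1)
    (hΛsa : IsSelfAdjoint Λ) (hΛidem : Λ * Λ = Λ) :
    Nonempty
        ((↥(LinearMap.ker (((1 + blockOp 0 (ContinuousLinearMap.adjoint V) V 0 : WithLp 2 (H × H) →L[ℂ] WithLp 2 (H × H)) : WithLp 2 (H × H) →ₗ[ℂ] WithLp 2 (H × H))) ⊓
            LinearMap.ker (((1 - blockOp ((2 : ℂ) • Λ - 1) 0 0 (1 - (2 : ℂ) • Λ) : WithLp 2 (H × H) →L[ℂ] WithLp 2 (H × H)) : WithLp 2 (H × H) →ₗ[ℂ] WithLp 2 (H × H))))) ≃ₗ[ℂ]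
          ↥(LinearMap.range (Λ : H →ₗ[ℂ] H) ⊓ LinearMap.ker ((Λ ∘L V : H →L[ℂ] H) : H →ₗ[ℂ] H))) ∧
      Nonempty
        ((↥(LinearMap.ker (((1 - blockOp 0 (ContinuousLinearMap.adjoint V) V 0 : WithLp 2 (H × H) →L[ℂ] WithLp 2 (H × H)) : WithLp 2 (H × H) →ₗ[ℂ] WithLp 2 (H × H))) ⊓
            LinearMap.ker (((1 + blockOp ((2 : ℂ) • Λ - 1) 0 0 (1 - (2 : ℂ) • Λ) : WithLp 2 (H × H) →L[ℂ] WithLp 2 (H × H)) : WithLp 2 (H × H) →ₗ[ℂ] WithLp 2 (H × H))))) ≃ₗ[ℂ]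
          ↥(LinearMap.range (Λ : H →ₗ[ℂ] H) ⊓ LinearMap.ker ((Λ ∘L ContinuousLinearMap.adjoint V : H →L[ℂ] H) : H →ₗ[ℂ] H))) ∧
      (FiniteDimensional ℂ ↥(LinearMap.ker (((Λ ∘L V ∘L Λ + (1 - Λ) : H →L[ℂ] H) : H →ₗ[ℂ] H))) →
        FiniteDimensional ℂ
          ↥(LinearMap.ker (((ContinuousLinearMap.adjoint (Λ ∘L V ∘L Λ + (1 - Λ)) : H →L[ℂ] H) : H →ₗ[ℂ] H))) →
        (Module.finrank ℂ
            ↥(LinearMap.ker (((1 + blockOp 0 (ContinuousLinearMap.adjoint V) V 0 : WithLp 2 (H × H) →L[ℂ] WithLp 2 (H × H)) : WithLp 2 (H × H) →ₗ[ℂ] WithLp 2 (H × H))) ⊓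
              LinearMap.ker (((1 - blockOp ((2 : ℂ) • Λ - 1) 0 0 (1 - (2 : ℂ) • Λ) : WithLp 2 (H × H) →L[ℂ] WithLp 2 (H × H)) : WithLp 2 (H × H) →ₗ[ℂ] WithLp 2 (H × H)))) : ℤ) -
          (Module.finrank ℂ
            ↥(LinearMap.ker (((1 - blockOp 0 (ContinuousLinearMap.adjoint V) V 0 : WithLp 2 (H × H) →L[ℂ] WithLp 2 (H × H)) : WithLp 2 (H × H) →ₗ[ℂ] WithLp 2 (H × H))) ⊓
              LinearMap.ker (((1 + blockOp ((2 : ℂ) • Λ - 1) 0 0 (1 - (2 : ℂ) • Λ) : WithLp 2 (H × H) →L[ℂ] WithLp 2 (H × H)) : WithLp 2 (H × H) →ₗ[ℂ] WithLp 2 (H × H)))) : ℤ) =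
        (Module.finrank ℂ ↥(LinearMap.ker (((Λ ∘L V ∘L Λ + (1 - Λ) : H →L[ℂ] H) : H →ₗ[ℂ] H))) : ℤ) -
          (Module.finrank ℂ
            ↥(LinearMap.ker (((ContinuousLinearMap.adjoint (Λ ∘L V ∘L Λ + (1 - Λ)) : H →L[ℂ] H) : H →ₗ[ℂ] H))) : ℤ)) := by
  have em : ↥(LinearMap.ker ((1 + blockOp 0 (ContinuousLinearMap.adjoint V) V 0 : WithLp 2 (H × H) →L[ℂ] WithLp 2 (H × H)) : WithLp 2 (H × H) →ₗ[ℂ] WithLp 2 (H × H)) ⊓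
        LinearMap.ker ((1 - blockOp ((2 : ℂ) • Λ - 1) 0 0 (1 - (2 : ℂ) • Λ) : WithLp 2 (H × H) →L[ℂ] WithLp 2 (H × H)) : WithLp 2 (H × H) →ₗ[ℂ] WithLp 2 (H × H))) ≃ₗ[ℂ]
      ↥(LinearMap.range (Λ : H →ₗ[ℂ] H) ⊓ LinearMap.ker ((Λ ∘L V : H →L[ℂ] H) : H →ₗ[ℂ] H)) :=
    (LinearEquiv.ofEq _ _ (ker_eq_minus V Λ hV₁ hΛidem)).trans
      (Submodule.equivMapOfInjective _ (Jm_inj V) _).symm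
  have ep : ↥(LinearMap.ker ((1 - blockOp 0 (ContinuousLinearMap.adjoint V) V 0 : WithLp 2 (H × H) →L[ℂ] WithLp 2 (H × H)) : WithLp 2 (H × H) →ₗ[ℂ] WithLp 2 (H × H)) ⊓
        LinearMap.ker ((1 + blockOp ((2 : ℂ) • Λ - 1) 0 0 (1 - (2 : ℂ) • Λ) : WithLp 2 (H × H) →L[ℂ] WithLp 2 (H × H)) : WithLp 2 (H × H) →ₗ[ℂ] WithLp 2 (H × H))) ≃ₗ[ℂ]
      ↥(LinearMap.range (Λ : H →ₗ[ℂ] H) ⊓ LinearMap.ker ((Λ ∘L ContinuousLinearMap.adjoint V : H →L[ℂ] H) : H →ₗ[ℂ] H)) :=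
    (LinearEquiv.ofEq _ _ (ker_eq_plus V Λ hV₂ hΛidem)).trans
      (Submodule.equivMapOfInjective _ (Jp_inj V) _).symm
  refine ⟨⟨em⟩, ⟨ep⟩, fun _ _ => ?_⟩
  have e1 := em.finrank_eq
  have e2 := ep.finrank_eq
  have e3 : LinearMap.ker ((Λ ∘L V ∘L Λ + (1 - Λ) : H →L[ℂ] H) : H →ₗ[ℂ] H) =
      LinearMap.range (Λ : H →ₗ[ℂ] H) ⊓ LinearMap.ker ((Λ ∘L V : H →L[ℂ] H) : H →ₗ[ℂ] H) := ker_T_eq V Λ hΛidem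
  have e4 : LinearMap.ker ((ContinuousLinearMap.adjoint (Λ ∘L V ∘L Λ + (1 - Λ)) : H →L[ℂ] H) : H →ₗ[ℂ] H) =
      LinearMap.range (Λ : H →ₗ[ℂ] H) ⊓ LinearMap.ker ((Λ ∘L ContinuousLinearMap.adjoint V : H →L[ℂ] H) : H →ₗ[ℂ] H) := by
    rw [adjoint_T V Λ hΛsa]
    exact ker_T_eq (ContinuousLinearMap.adjoint V) Λ hΛidem
  rw [e1, e2, e3, e4]
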